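/- Let $R$ be a complete discrete valuation ring of mixed characteristic $(0,p)$ with valuation $v$, $v(p)=1$, and let $A = R[[t]]$. Let $f \in A^\times$, $h \in A^\times$, and suppose $v_0(f - h^p) > p/(p-1)$, where $v_0(\sum g_i t^i) = \min_i v(g_i)$. Then $f$ is a $p$-th power in $A$. -/

import Mathlib

/-!
Newton's iteration for the `p`-th root, in a ring `A` complete for a principal ideal `(π)` with
`p = unit * π ^ e`. If `π ^ n ∣ f - x ^ p` with `(p - 1) n > p e`, write
`f - x ^ p = p x ^ (p - 1) c`, so that `π ^ (n - e) ∣ c`. In the binomial expansion of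
`f - (x + c) ^ p` the terms with `0 < k < p - 1` gain `e + 2 (n - e)` from `p ∣ choose p k`,
and `c ^ p` gains `p (n - e)`; both are at least `n + 1`. The corrections tend to `0`
`π`-adically, so the approximations converge to a `p`-th root of `f`. For `A = R⟦X⟧` and
`π = C ϖ`, completeness reduces coefficientwise to that of `R`.
-/

open PowerSeries

theorem Nat.lt_of_mul_lt_sub_one_mul {p e n : ℕ} (h : p * e < (p - 1) * n) : e < n := by
  by_contra! hne
  have := Nat.mul_le_mul (Nat.sub_le p 1) hne
  omega

theorem ENat.exists_nat_of_natCast_mul_lt_natCast_mul {a b : ℕ} {x y : ℕ∞} (ha : a ≠ 0)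
    (h : a * x < b * y) : ∃ e N : ℕ, x = e ∧ a * e < b * N ∧ (N : ℕ∞) ≤ y := by
  induction x using ENat.recTopCoe with
  | top => simp [ENat.mul_top, ha] at h
  | coe e =>
    induction y using ENat.recTopCoe with
    | top =>
      have hb : b ≠ 0 := by rintro rfl; simp at h
      exact ⟨e, a * e + 1, rfl,
        (Nat.lt_succ_self _).trans_le (Nat.le_mul_of_pos_left _ (Nat.pos_of_ne_zero hb)), le_top⟩
    | coe N => exact ⟨e, N, rfl, by exact_mod_cast h, le_rfl⟩

section AdicallyComplete

variable {A : Type*} [CommRing A] {π : A}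

theorem smodEq_span_singleton_pow_iff {x y : A} {n : ℕ} :
    x ≡ y [SMOD (Ideal.span {π} ^ n • ⊤ : Submodule A A)] ↔ π ^ n ∣ x - y := by
  rw [SModEq.sub_mem, smul_eq_mul, Ideal.mul_top, Ideal.span_singleton_pow,
    Ideal.mem_span_singleton]

theorem IsHausdorff.eq_zero_of_forall_pow_dvd [IsHausdorff (Ideal.span {π}) A] {x : A}
    (hx : ∀ n, π ^ n ∣ x) : x = 0 :=
  IsHausdorff.haus ‹_› x fun n => smodEq_span_singleton_pow_iff.mpr (by simpa using hx n)

theorem IsPrecomplete.exists_pow_dvd_sub_of_pow_dvd_succ_sub [IsPrecomplete (Ideal.span {π}) A]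
    {s : ℕ → A} (hs : ∀ n, π ^ n ∣ s (n + 1) - s n) : ∃ L, ∀ n, π ^ n ∣ L - s n := by
  have cauchy : ∀ m k, π ^ m ∣ s (m + k) - s m := by
    intro m k
    induction k with
    | zero => simp
    | succ k ih =>
      rw [← add_assoc, ← sub_add_sub_cancel _ (s (m + k))]
      exact dvd_add ((pow_dvd_pow π (by omega)).trans (hs _)) ih
  obtain ⟨L, hL⟩ := IsPrecomplete.prec ‹_› (f := s) fun {m n} hmn => by
    obtain ⟨k, rfl⟩ := Nat.exists_eq_add_of_le hmn
    rw [smodEq_span_singleton_pow_iff, dvd_sub_comm]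
    exact cauchy m k
  exact ⟨L, fun n => dvd_sub_comm.mp (smodEq_span_singleton_pow_iff.mp (hL n))⟩

theorem IsUnit.add_of_mem_jacobson_bot {x c : A} (hx : IsUnit x)
    (hc : c ∈ (⊥ : Ideal A).jacobson) : IsUnit (x + c) := by
  obtain ⟨u, rfl⟩ := hx
  have h := Ideal.mem_jacobson_bot.mp hc ↑u⁻¹
  convert h.mul u.isUnit using 1
  rw [add_mul, mul_assoc, Units.inv_mul, mul_one, one_mul, add_comm]

end AdicallyComplete

section Newton

variable {A : Type*} [CommRing A] {π : A} {p e n : ℕ}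

theorem pow_dvd_sub_add_pow (hp : p.Prime) (hpe : π ^ e ∣ (p : A)) (hn : p * e < (p - 1) * n)
    {f x c : A} (hc : π ^ (n - e) ∣ c) (hfc : f - x ^ p = p * x ^ (p - 1) * c) :
    π ^ (n + 1) ∣ f - (x + c) ^ p := by
  obtain ⟨q, rfl⟩ : ∃ q, p = q + 1 := ⟨p - 1, (Nat.sub_add_cancel hp.one_le).symm⟩
  obtain ⟨m, rfl⟩ := Nat.exists_eq_add_of_lt (Nat.lt_of_mul_lt_sub_one_mul hn)
  rw [show e + m + 1 - e = m + 1 by omega] at hc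
  rw [Nat.add_sub_cancel] at hn hfc
  have hexpand : f - (x + c) ^ (q + 1) =
      -∑ k ∈ Finset.range q, x ^ k * c ^ (q + 1 - k) * ((q + 1).choose k : A) := by
    rw [add_pow, Finset.sum_range_succ, Finset.sum_range_succ, Nat.choose_succ_self_right,
      Nat.choose_self, Nat.sub_self, Nat.add_sub_cancel_left]
    linear_combination hfc
  rw [hexpand, dvd_neg]
  refine Finset.dvd_sum fun k hk => ?_
  rw [Finset.mem_range] at hk
  rcases Nat.eq_zero_or_pos k with rfl | hk0
  · rw [pow_zero, one_mul, Nat.choose_zero_right, Nat.cast_one, mul_one, Nat.sub_zero]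
    calc π ^ (e + m + 1 + 1) ∣ (π ^ (m + 1)) ^ (q + 1) := by
          rw [← pow_mul]; exact pow_dvd_pow π (by nlinarith)
      _ ∣ c ^ (q + 1) := pow_dvd_pow_of_dvd hc _
  · have hchoose : π ^ e ∣ ((q + 1).choose k : A) :=
      hpe.trans (Nat.cast_dvd_cast (hp.dvd_choose_self hk0.ne' (by omega)))
    calc π ^ (e + m + 1 + 1) ∣ (π ^ (m + 1)) ^ 2 * π ^ e := by
          rw [← pow_mul, ← pow_add]; exact pow_dvd_pow π (by omega)
      _ ∣ c ^ (q + 1 - k) * ((q + 1).choose k : A) :=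
          mul_dvd_mul ((pow_dvd_pow_of_dvd hc 2).trans (pow_dvd_pow c (by omega))) hchoose
      _ ∣ x ^ k * c ^ (q + 1 - k) * ((q + 1).choose k : A) := by
          rw [mul_assoc]; exact dvd_mul_left _ _

theorem exists_pow_dvd_sub_pow_succ (hp : p.Prime) (hpe : Associated (π ^ e) (p : A))
    (hπ : π ∈ (⊥ : Ideal A).jacobson) (hn : p * e < (p - 1) * n) {f x : A} (hx : IsUnit x)
    (hfx : π ^ n ∣ f - x ^ p) :
    ∃ y, IsUnit y ∧ π ^ (n - e) ∣ y - x ∧ π ^ (n + 1) ∣ f - y ^ p := by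
  have hen := Nat.lt_of_mul_lt_sub_one_mul hn
  obtain ⟨d, hd⟩ := hfx
  obtain ⟨u, hu⟩ := hpe
  obtain ⟨v, rfl⟩ := hx
  set c := π ^ (n - e) * (d * ↑u⁻¹ * ↑v⁻¹ ^ (p - 1)) with hc
  have hcdvd : π ^ (n - e) ∣ c := dvd_mul_right _ _
  have hfc : f - v ^ p = p * v ^ (p - 1) * c := by
    have hu1 : (u : A) * ↑u⁻¹ = 1 := u.mul_inv
    have hv1 : (v : A) ^ (p - 1) * ↑v⁻¹ ^ (p - 1) = 1 := by rw [← mul_pow, v.mul_inv, one_pow]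
    rw [hd, ← hu, hc, ← pow_mul_pow_sub π hen.le]
    linear_combination (-(π ^ e * π ^ (n - e) * d)) * hu1
      - π ^ e * π ^ (n - e) * d * u * ↑u⁻¹ * hv1
  refine ⟨v + c, v.isUnit.add_of_mem_jacobson_bot ?_, by rwa [add_sub_cancel_left],
    pow_dvd_sub_add_pow hp (Dvd.intro _ hu) hn hcdvd hfc⟩
  obtain ⟨w, hw⟩ := (dvd_pow_self π (by omega)).trans hcdvd
  rw [hw]
  exact Ideal.mul_mem_right w _ hπ

theorem exists_pow_eq_of_pow_dvd_sub_pow [IsAdicComplete (Ideal.span {π}) A] {N : ℕ}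
    (hp : p.Prime) (hpe : Associated (π ^ e) (p : A)) (hN : p * e < (p - 1) * N) {f x : A}
    (hx : IsUnit x) (hfx : π ^ N ∣ f - x ^ p) : ∃ g, g ^ p = f := by
  have heN := Nat.lt_of_mul_lt_sub_one_mul hN
  have hπ : π ∈ (⊥ : Ideal A).jacobson :=
    IsAdicComplete.le_jacobson_bot _ (Ideal.mem_span_singleton_self π)
  let Approx (n : ℕ) := {y : A // IsUnit y ∧ π ^ (N + n) ∣ f - y ^ p}
  have step : ∀ n (y : Approx n), ∃ z : Approx (n + 1), π ^ n ∣ z.1 - y.1 := by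
    rintro n ⟨y, hy, hfy⟩
    obtain ⟨z, hz, hzy, hfz⟩ := exists_pow_dvd_sub_pow_succ hp hpe hπ
      (hN.trans_le (Nat.mul_le_mul_left _ (Nat.le_add_right N n))) hy hfy
    exact ⟨⟨z, hz, hfz⟩, (pow_dvd_pow π (by omega)).trans hzy⟩
  choose next hnext using step
  let s (n : ℕ) : Approx n := Nat.rec ⟨x, hx, hfx⟩ next n
  obtain ⟨g, hg⟩ := IsPrecomplete.exists_pow_dvd_sub_of_pow_dvd_succ_sub
    (s := fun n => (s n).1) fun n => hnext n (s n)
  refine ⟨g, sub_eq_zero.mp (IsHausdorff.eq_zero_of_forall_pow_dvd (π := π) fun n => ?_)⟩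
  rw [← sub_add_sub_cancel _ ((s n).1 ^ p)]
  exact dvd_add ((hg n).trans (sub_dvd_pow_sub_pow _ _ p))
    (dvd_sub_comm.mp ((pow_dvd_pow π (Nat.le_add_left n N)).trans (s n).2.2))

end Newton

namespace PowerSeries

variable {R : Type*} [CommRing R]

theorem C_dvd_iff {a : R} {f : R⟦X⟧} : C a ∣ f ↔ ∀ i, a ∣ coeff i f := by
  refine ⟨fun ⟨g, hg⟩ i => ⟨coeff i g, by rw [hg, coeff_C_mul]⟩, fun h => ?_⟩
  choose q hq using h
  exact ⟨mk q, ext fun i => by rw [coeff_C_mul, coeff_mk, hq]⟩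

instance isAdicComplete_span_C {a : R} [IsAdicComplete (Ideal.span {a}) R] :
    IsAdicComplete (Ideal.span {C a}) R⟦X⟧ where
  haus' f hf := by
    ext i
    refine IsHausdorff.eq_zero_of_forall_pow_dvd (π := a) fun n => ?_
    have h := smodEq_span_singleton_pow_iff.mp (hf n)
    rw [sub_zero, ← map_pow, C_dvd_iff] at h
    simpa using h i
  prec' s hs := by
    have hcoeff : ∀ i {m n : ℕ}, m ≤ n →
        coeff i (s m) ≡ coeff i (s n) [SMOD (Ideal.span {a} ^ m • ⊤ : Submodule R R)] := by
      intro i m n hmn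
      have h := smodEq_span_singleton_pow_iff.mp (hs hmn)
      rw [← map_pow, C_dvd_iff] at h
      rw [smodEq_span_singleton_pow_iff, ← map_sub]
      exact h i
    choose L hL using fun i => IsPrecomplete.prec inferInstance (hcoeff i)
    refine ⟨mk L, fun n => ?_⟩
    rw [smodEq_span_singleton_pow_iff, ← map_pow, C_dvd_iff]
    intro i
    rw [map_sub, coeff_mk]
    exact smodEq_span_singleton_pow_iff.mp (hL i n)

theorem C_pow_dvd_of_le_iInf_addVal_coeff [IsDomain R] [IsDiscreteValuationRing R] {ϖ : R}
    (hϖ : Irreducible ϖ) {n : ℕ} {f : R⟦X⟧}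
    (hf : (n : ℕ∞) ≤ ⨅ i, IsDiscreteValuationRing.addVal R (coeff i f)) : C ϖ ^ n ∣ f := by
  rw [← map_pow, C_dvd_iff]
  intro i
  rw [← IsDiscreteValuationRing.addVal_le_iff_dvd, hϖ.addVal_pow]
  exact hf.trans (iInf_le _ i)

end PowerSeries

theorem stmt9_general (R : Type*) [CommRing R] [IsDomain R] [IsDiscreteValuationRing R]
    [IsAdicComplete (IsLocalRing.maximalIdeal R) R]
    (p : ℕ) (hp : p.Prime)
    (f h : PowerSeries R) (hh : IsUnit h)
    (hv : (p : ℕ∞) * (IsDiscreteValuationRing.addVal R (p : R)) <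
      ((p - 1 : ℕ) : ℕ∞) *
        ⨅ i : ℕ, IsDiscreteValuationRing.addVal R (PowerSeries.coeff i (f - h ^ p))) :
    ∃ g : PowerSeries R, g ^ p = f := by
  obtain ⟨ϖ, hϖ⟩ := IsDiscreteValuationRing.exists_irreducible R
  have : IsAdicComplete (Ideal.span {ϖ}) R := hϖ.maximalIdeal_eq ▸ ‹_›
  obtain ⟨e, N, he, hN, hNv⟩ := ENat.exists_nat_of_natCast_mul_lt_natCast_mul hp.ne_zero hv
  have hpe : Associated (ϖ ^ e) (p : R) := by
    rw [← IsDiscreteValuationRing.addVal_eq_iff_associated, hϖ.addVal_pow, he]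
  refine exists_pow_eq_of_pow_dvd_sub_pow hp ?_ hN hh (C_pow_dvd_of_le_iInf_addVal_coeff hϖ hNv)
  simpa using hpe.map C

/-- Let `R` be a complete discrete valuation ring of mixed characteristic `(0,p)` with
(additive) valuation `v`, normalized below via the value `e := v p` (so that the Gauss
valuation `v₀` on `A = R[[t]]`, given by the minimum of the valuations of the coefficients,
is normalized by `v₀ p = 1` after dividing by `e`).  If `f, h ∈ A` are units and
`v₀ (f - h^p) > p/(p-1)`, i.e. `(p-1) · min_i v (coeff i (f - h^p)) > p · e`,
then `f` is a `p`-th power in `A`. -/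
theorem stmt9 (R : Type*) [CommRing R] [IsDomain R] [IsDiscreteValuationRing R]
    [IsAdicComplete (IsLocalRing.maximalIdeal R) R] [CharZero R]
    (p : ℕ) (hp : p.Prime) [CharP (IsLocalRing.ResidueField R) p]
    (f h : PowerSeries R) (hf : IsUnit f) (hh : IsUnit h)
    (hv : (p : ℕ∞) * (IsDiscreteValuationRing.addVal R (p : R)) <
      ((p - 1 : ℕ) : ℕ∞) *
        ⨅ i : ℕ, IsDiscreteValuationRing.addVal R (PowerSeries.coeff i (f - h ^ p))) :
    ∃ g : PowerSeries R, g ^ p = f :=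
  stmt9_general R p hp f h hh hv
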